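/- arXiv:1005.3192 — 2 statements merged into one kernel-verified Lean document; each statement's English description precedes it below -/
import Mathlib

section
/- Let W be a module, a, b submodules of W, and x, y, z common complements of a and b. Then the image of y under M_{xabz} := P_x^a − P_b^z is again a common complement of a and b. Hence the set C_{ab} of common complements of a and b is closed under the ternary operation (x, y, z) ↦ M_{xabz}(y), and this operation makes C_{ab} a torsor. -/
/-- The projector of `W` onto `x` along `a`, as an endomorphism of `W`. -/
noncomputable def prj {R : Type*} [Ring R] {W : Type*} [AddCommGroup W] [Module R W]
    (x a : Submodule R W) (h : IsCompl x a) : W →ₗ[R] W :=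
  x.subtype ∘ₗ x.linearProjOfIsCompl a h

/-- The set of common complements of `a` and `b`. -/
def Cab {R : Type*} [Ring R] (W : Type*) [AddCommGroup W] [Module R W]
    (a b : Submodule R W) : Type _ :=
  {x : Submodule R W // IsCompl x a ∧ IsCompl x b}

/-- The ternary operation `(x, y, z) ↦ M_{xabz}(y) = (P_x^a − P_b^z)(y)` on common
complements of `a` and `b`. -/
noncomputable def tern {R : Type*} [Ring R] {W : Type*} [AddCommGroup W] [Module R W]
    {a b : Submodule R W} (x y z : Cab W a b) : Submodule R W :=
  Submodule.map (prj x.1 a x.2.1 - prj b z.1 z.2.2.symm) y.1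

section Helpers

variable {R : Type*} [Ring R] {W : Type*} [AddCommGroup W] [Module R W]

lemma prj_mem {x a : Submodule R W} (h : IsCompl x a) (w : W) : prj x a h w ∈ x :=
  (x.linearProjOfIsCompl a h w).2

lemma sub_prj_mem {x a : Submodule R W} (h : IsCompl x a) (w : W) : w - prj x a h w ∈ a := by
  have h1 := Submodule.projection_add_projection_eq_self h w
  have h2 : w - prj x a h w = (a.linearProjOfIsCompl x h.symm w : W) :=
    (eq_sub_of_add_eq' h1).symm
  rw [h2]
  exact (a.linearProjOfIsCompl x h.symm w).2

lemma prj_left {x a : Submodule R W} (h : IsCompl x a) {w : W} (hw : w ∈ x) :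
    prj x a h w = w := by
  rw [prj]; dsimp
  exact congrArg Subtype.val (Submodule.projectionOnto_apply_left h ⟨w, hw⟩)

lemma prj_right {x a : Submodule R W} (h : IsCompl x a) {w : W} (hw : w ∈ a) :
    prj x a h w = 0 := by
  rw [prj]; dsimp
  exact congrArg Subtype.val (Submodule.projectionOnto_apply_of_mem_right h hw)

lemma prj_eq {x a : Submodule R W} (h : IsCompl x a) {w w' : W} (h1 : w' ∈ x)
    (h2 : w - w' ∈ a) : prj x a h w = w' := by
  have h3 : prj x a h w = prj x a h w' + prj x a h (w - w') := by
    rw [← map_add]; congr 1; abel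
  rw [h3, prj_left h h1, prj_right h h2, add_zero]

variable {a b : Submodule R W}

/-- Surjectivity of `w ↦ w - P_b^z w` from `y` onto `z`. -/
lemma exists_y (y z : Cab W a b) {s : W} (hs : s ∈ z.1) :
    ∃ w ∈ y.1, w - prj b z.1 z.2.2.symm w = s := by
  refine ⟨prj y.1 b y.2.2 s, prj_mem _ _, ?_⟩
  have h1 : prj b z.1 z.2.2.symm (prj y.1 b y.2.2 s) = prj y.1 b y.2.2 s - s :=
    prj_eq _ (by have := neg_mem (sub_prj_mem y.2.2 s); rwa [neg_sub] at this)
      (by rw [sub_sub_cancel]; exact hs)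
  rw [h1]; abel

/-- Surjectivity of `P_u^a` from `z` onto `u`. -/
lemma exists_u (z u : Cab W a b) {t : W} (ht : t ∈ u.1) :
    ∃ s ∈ z.1, prj u.1 a u.2.1 s = t :=
  ⟨prj z.1 a z.2.1 t, prj_mem _ _,
    prj_eq _ ht (by have := neg_mem (sub_prj_mem z.2.1 t); rwa [neg_sub] at this)⟩

/-- Closure: `tern x y z` is a common complement of `a` and `b`. -/
lemma tern_compl (x y z : Cab W a b) :
    IsCompl (tern x y z) a ∧ IsCompl (tern x y z) b := by
  constructor
  · constructor
    · rw [Submodule.disjoint_def]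
      intro el hel hela
      obtain ⟨w, hw, rfl⟩ := Submodule.mem_map.1 hel
      rw [LinearMap.sub_apply] at hela ⊢
      have h1 : w - prj b z.1 z.2.2.symm w ∈ a := by
        have h2 : w - prj b z.1 z.2.2.symm w
            = (w - prj x.1 a x.2.1 w) + (prj x.1 a x.2.1 w - prj b z.1 z.2.2.symm w) := by abel
        rw [h2]; exact a.add_mem (sub_prj_mem x.2.1 w) hela
      have h3 : w - prj b z.1 z.2.2.symm w = 0 :=
        Submodule.disjoint_def.1 z.2.1.disjoint _ (sub_prj_mem z.2.2.symm w) h1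
      have h4 : w ∈ b := by
        rw [sub_eq_zero] at h3; rw [h3]; exact prj_mem z.2.2.symm w
      have h5 : w = 0 := Submodule.disjoint_def.1 y.2.2.disjoint w hw h4
      rw [h5]; simp
    · rw [codisjoint_iff, eq_top_iff]
      rintro w -
      have hw : w ∈ z.1 ⊔ a := by rw [z.2.1.sup_eq_top]; trivial
      obtain ⟨s, hs, c, hc, rfl⟩ := Submodule.mem_sup.1 hw
      obtain ⟨w', hw', hws⟩ := exists_y y z hs
      have hfz : prj b z.1 z.2.2.symm w' = w' - s := by rw [← hws]; abel
      refine Submodule.mem_sup.2 ⟨(prj x.1 a x.2.1 - prj b z.1 z.2.2.symm) w',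
        Submodule.mem_map_of_mem hw', (w' - prj x.1 a x.2.1 w') + c,
        a.add_mem (sub_prj_mem x.2.1 w') hc, ?_⟩
      rw [LinearMap.sub_apply, hfz]; abel
  · constructor
    · rw [Submodule.disjoint_def]
      intro el hel helb
      obtain ⟨w, hw, rfl⟩ := Submodule.mem_map.1 hel
      rw [LinearMap.sub_apply] at helb ⊢
      have h1 : prj x.1 a x.2.1 w ∈ b := by
        have h2 : prj x.1 a x.2.1 w
            = (prj x.1 a x.2.1 w - prj b z.1 z.2.2.symm w) + prj b z.1 z.2.2.symm w := by abel
        rw [h2]; exact b.add_mem helb (prj_mem z.2.2.symm w)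
      have h3 : prj x.1 a x.2.1 w = 0 :=
        Submodule.disjoint_def.1 x.2.2.disjoint _ (prj_mem x.2.1 w) h1
      have h4 : w ∈ a := by
        have := sub_prj_mem x.2.1 w; rwa [h3, sub_zero] at this
      have h5 : w = 0 := Submodule.disjoint_def.1 y.2.1.disjoint w hw h4
      rw [h5]; simp
    · rw [codisjoint_iff, eq_top_iff]
      rintro w -
      have hw : w ∈ x.1 ⊔ b := by rw [x.2.2.sup_eq_top]; trivial
      obtain ⟨x₀, hx₀, b₀, hb₀, rfl⟩ := Submodule.mem_sup.1 hw
      have hu : prj x.1 a x.2.1 (prj y.1 a y.2.1 x₀) = x₀ :=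
        prj_eq x.2.1 hx₀ (by have := neg_mem (sub_prj_mem y.2.1 x₀); rwa [neg_sub] at this)
      refine Submodule.mem_sup.2 ⟨(prj x.1 a x.2.1 - prj b z.1 z.2.2.symm) (prj y.1 a y.2.1 x₀),
        Submodule.mem_map_of_mem (prj_mem y.2.1 x₀),
        prj b z.1 z.2.2.symm (prj y.1 a y.2.1 x₀) + b₀,
        b.add_mem (prj_mem z.2.2.symm _) hb₀, ?_⟩
      rw [LinearMap.sub_apply, hu]; abel

/-- Formula for the projector onto `b` along `tern z u v`. -/
lemma prj_b_tern (z u v : Cab W a b) (hc : IsCompl b (tern z u v)) (w : W) :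
    prj b (tern z u v) hc w =
      prj b z.1 z.2.2.symm w +
        prj b v.1 v.2.2.symm (prj u.1 a u.2.1 (w - prj b z.1 z.2.2.symm w)) := by
  apply prj_eq
  · exact b.add_mem (prj_mem _ _) (prj_mem _ _)
  · have h1 : prj z.1 a z.2.1 (prj u.1 a u.2.1 (w - prj b z.1 z.2.2.symm w))
        = w - prj b z.1 z.2.2.symm w :=
      prj_eq z.2.1 (sub_prj_mem z.2.2.symm w)
        (by have := neg_mem (sub_prj_mem u.2.1 (w - prj b z.1 z.2.2.symm w))
            rwa [neg_sub] at this)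
    have h2 : w - (prj b z.1 z.2.2.symm w +
          prj b v.1 v.2.2.symm (prj u.1 a u.2.1 (w - prj b z.1 z.2.2.symm w)))
        = (prj z.1 a z.2.1 - prj b v.1 v.2.2.symm)
            (prj u.1 a u.2.1 (w - prj b z.1 z.2.2.symm w)) := by
      rw [LinearMap.sub_apply, h1]; abel
    rw [h2]
    exact Submodule.mem_map_of_mem (prj_mem u.2.1 _)

/-- Formula for the projector onto `tern x y z` along `a`. -/
lemma prj_tern_a (x y z : Cab W a b) (hc : IsCompl (tern x y z) a) (w : W) :
    prj (tern x y z) a hc w =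
      (prj x.1 a x.2.1 - prj b z.1 z.2.2.symm) (prj y.1 b y.2.2 (prj z.1 a z.2.1 w)) := by
  have hfz : prj b z.1 z.2.2.symm (prj y.1 b y.2.2 (prj z.1 a z.2.1 w))
      = prj y.1 b y.2.2 (prj z.1 a z.2.1 w) - prj z.1 a z.2.1 w :=
    prj_eq _ (by have := neg_mem (sub_prj_mem y.2.2 (prj z.1 a z.2.1 w))
                 rwa [neg_sub] at this)
      (by rw [sub_sub_cancel]; exact prj_mem z.2.1 w)
  apply prj_eq
  · exact Submodule.mem_map_of_mem (prj_mem y.2.2 _)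
  · have h1 : w - (prj x.1 a x.2.1 - prj b z.1 z.2.2.symm)
          (prj y.1 b y.2.2 (prj z.1 a z.2.1 w))
        = (w - prj z.1 a z.2.1 w) + (prj y.1 b y.2.2 (prj z.1 a z.2.1 w)
            - prj x.1 a x.2.1 (prj y.1 b y.2.2 (prj z.1 a z.2.1 w))) := by
      rw [LinearMap.sub_apply, hfz]; abel
    rw [h1]
    exact a.add_mem (sub_prj_mem z.2.1 w) (sub_prj_mem x.2.1 _)

lemma law1_key (x y z u v : Cab W a b) (hc : IsCompl b (tern z u v)) {w : W} (hw : w ∈ y.1) :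
    (prj x.1 a x.2.1 - prj b (tern z u v) hc) w =
      (prj x.1 a x.2.1 - prj b v.1 v.2.2.symm)
        ((prj u.1 a u.2.1 - prj b y.1 y.2.2.symm) (w - prj b z.1 z.2.2.symm w)) := by
  have hb := prj_b_tern z u v hc w
  have h1 : prj b y.1 y.2.2.symm (w - prj b z.1 z.2.2.symm w) = -(prj b z.1 z.2.2.symm w) :=
    prj_eq y.2.2.symm (neg_mem (prj_mem z.2.2.symm w))
      (by rw [sub_neg_eq_add, sub_add_cancel]; exact hw)
  have h2 : prj b v.1 v.2.2.symm (prj b z.1 z.2.2.symm w) = prj b z.1 z.2.2.symm w :=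
    prj_left v.2.2.symm (prj_mem z.2.2.symm w)
  have h0 := prj_right x.2.1
    (sub_prj_mem u.2.1 (w - prj b z.1 z.2.2.symm w))
  rw [map_sub, sub_eq_zero] at h0
  have h3 : prj x.1 a x.2.1 (prj u.1 a u.2.1 (w - prj b z.1 z.2.2.symm w))
      = prj x.1 a x.2.1 w - prj x.1 a x.2.1 (prj b z.1 z.2.2.symm w) := by
    rw [← h0]; exact map_sub _ _ _
  simp only [LinearMap.sub_apply]
  rw [hb, h1, sub_neg_eq_add, map_add, map_add, h2, h3]
  abel

lemma law2_key (x y z u v : Cab W a b) (hc : IsCompl b (tern z u v))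
    (hc2 : IsCompl (tern x y z) a) {w : W} (hw : w ∈ y.1) :
    (prj x.1 a x.2.1 - prj b (tern z u v) hc) w =
      (prj (tern x y z) a hc2 - prj b v.1 v.2.2.symm)
        (prj u.1 a u.2.1 (w - prj b z.1 z.2.2.symm w)) := by
  have hb := prj_b_tern z u v hc w
  have ha := prj_tern_a x y z hc2 (prj u.1 a u.2.1 (w - prj b z.1 z.2.2.symm w))
  have h4 : prj z.1 a z.2.1 (prj u.1 a u.2.1 (w - prj b z.1 z.2.2.symm w))
      = w - prj b z.1 z.2.2.symm w :=
    prj_eq z.2.1 (sub_prj_mem z.2.2.symm w)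
      (by have := neg_mem (sub_prj_mem u.2.1 (w - prj b z.1 z.2.2.symm w))
          rwa [neg_sub] at this)
  have h5 : prj y.1 b y.2.2 (w - prj b z.1 z.2.2.symm w) = w :=
    prj_eq y.2.2 hw (by rw [sub_sub_cancel_left]; exact neg_mem (prj_mem z.2.2.symm w))
  rw [LinearMap.sub_apply, LinearMap.sub_apply, hb, ha, h4, h5, LinearMap.sub_apply]
  abel

lemma tern_assoc1 (x y z u v : Cab W a b)
    (hzuv : IsCompl (tern z u v) a ∧ IsCompl (tern z u v) b)
    (huzy : IsCompl (tern u z y) a ∧ IsCompl (tern u z y) b) :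
    tern x y (⟨tern z u v, hzuv⟩ : Cab W a b) = tern x (⟨tern u z y, huzy⟩ : Cab W a b) v := by
  apply le_antisymm
  · intro el hel
    obtain ⟨w, hw, rfl⟩ := Submodule.mem_map.1 hel
    rw [law1_key x y z u v hzuv.2.symm hw]
    exact Submodule.mem_map_of_mem (Submodule.mem_map_of_mem (sub_prj_mem z.2.2.symm w))
  · intro el hel
    obtain ⟨s', hs', rfl⟩ := Submodule.mem_map.1 hel
    obtain ⟨s, hs, rfl⟩ := Submodule.mem_map.1 hs'
    obtain ⟨w, hw, hws⟩ := exists_y y z hs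
    rw [← hws, ← law1_key x y z u v hzuv.2.symm hw]
    exact Submodule.mem_map_of_mem hw

lemma tern_assoc2 (x y z u v : Cab W a b)
    (hzuv : IsCompl (tern z u v) a ∧ IsCompl (tern z u v) b)
    (hxyz : IsCompl (tern x y z) a ∧ IsCompl (tern x y z) b) :
    tern x y (⟨tern z u v, hzuv⟩ : Cab W a b) = tern (⟨tern x y z, hxyz⟩ : Cab W a b) u v := by
  apply le_antisymm
  · intro el hel
    obtain ⟨w, hw, rfl⟩ := Submodule.mem_map.1 hel
    rw [law2_key x y z u v hzuv.2.symm hxyz.1 hw]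
    exact Submodule.mem_map_of_mem (prj_mem u.2.1 _)
  · intro el hel
    obtain ⟨r, hr, rfl⟩ := Submodule.mem_map.1 hel
    obtain ⟨s, hs, hsu⟩ := exists_u z u hr
    obtain ⟨w, hw, hws⟩ := exists_y y z hs
    rw [← hsu, ← hws, ← law2_key x y z u v hzuv.2.symm hxyz.1 hw]
    exact Submodule.mem_map_of_mem hw

lemma tern_idem1 (x y : Cab W a b) : tern x x y = y.1 := by
  apply le_antisymm
  · intro el hel
    obtain ⟨t, ht, rfl⟩ := Submodule.mem_map.1 hel
    rw [LinearMap.sub_apply, prj_left x.2.1 ht]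
    exact sub_prj_mem y.2.2.symm t
  · intro w hw
    refine Submodule.mem_map.2 ⟨prj x.1 b x.2.2 w, prj_mem _ _, ?_⟩
    have hf : prj b y.1 y.2.2.symm (prj x.1 b x.2.2 w) = prj x.1 b x.2.2 w - w :=
      prj_eq y.2.2.symm (by have := neg_mem (sub_prj_mem x.2.2 w); rwa [neg_sub] at this)
        (by rw [sub_sub_cancel]; exact hw)
    rw [LinearMap.sub_apply, prj_left x.2.1 (prj_mem x.2.2 w), hf]
    abel

lemma tern_idem2 (x y : Cab W a b) : tern y x x = y.1 := by
  apply le_antisymm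
  · intro el hel
    obtain ⟨t, ht, rfl⟩ := Submodule.mem_map.1 hel
    rw [LinearMap.sub_apply, prj_right x.2.2.symm ht, sub_zero]
    exact prj_mem y.2.1 t
  · intro w hw
    refine Submodule.mem_map.2 ⟨prj x.1 a x.2.1 w, prj_mem _ _, ?_⟩
    have h1 : prj y.1 a y.2.1 (prj x.1 a x.2.1 w) = w :=
      prj_eq y.2.1 hw (by have := neg_mem (sub_prj_mem x.2.1 w); rwa [neg_sub] at this)
    rw [LinearMap.sub_apply, prj_right x.2.2.symm (prj_mem x.2.1 w), sub_zero, h1]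

end Helpers

/-- `C_{ab}` is closed under `(x,y,z) ↦ M_{xabz}(y)`, and this ternary operation makes
`C_{ab}` a torsor (para-associative law and idempotent laws). -/
theorem Cab_torsor {R : Type*} [Ring R] {W : Type*} [AddCommGroup W] [Module R W]
    (a b : Submodule R W) :
    (∀ x y z : Cab W a b, IsCompl (tern x y z) a ∧ IsCompl (tern x y z) b) ∧
    ∃ T : Cab W a b → Cab W a b → Cab W a b → Cab W a b,
      (∀ x y z, (T x y z).1 = tern x y z) ∧
      (∀ x y z u v, T x y (T z u v) = T x (T u z y) v) ∧
      (∀ x y z u v, T x y (T z u v) = T (T x y z) u v) ∧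
      (∀ x y, T x x y = y) ∧ (∀ x y, T y x x = y) := by
  refine ⟨tern_compl, ⟨fun x y z => ⟨tern x y z, tern_compl x y z⟩, fun _ _ _ => rfl,
    ?_, ?_, ?_, ?_⟩⟩
  · intro x y z u v
    exact Subtype.ext (tern_assoc1 x y z u v (tern_compl z u v) (tern_compl u z y))
  · intro x y z u v
    exact Subtype.ext (tern_assoc2 x y z u v (tern_compl z u v) (tern_compl x y z))
  · intro x y
    exact Subtype.ext (tern_idem1 x y)
  · intro x y
    exact Subtype.ext (tern_idem2 x y)
end

section
/- Let W be a module and a a submodule. On the set C_a of complements of a, the ternary operation (x, y, z) ↦ (P_x^a − P_y^a + P_z^a)(W) is well-defined (the operator P_x^a − P_y^a + P_z^a is an idempotent with kernel a, and its image is a complement of a), and it makes C_a an abelian torsor (commutative: (x y z) = (z y x)). -/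
/-- The set of complements of `a`. -/
def Ca {R : Type*} [Ring R] (W : Type*) [AddCommGroup W] [Module R W]
    (a : Submodule R W) : Type _ :=
  {x : Submodule R W // IsCompl x a}

/-- The operator `P_x^a − P_y^a + P_z^a` for complements `x, y, z` of `a`. -/
noncomputable def Q {R : Type*} [Ring R] {W : Type*} [AddCommGroup W] [Module R W]
    {a : Submodule R W} (x y z : Ca W a) : W →ₗ[R] W :=
  prj x.1 a x.2 - prj y.1 a y.2 + prj z.1 a z.2

/-!
A complement `x` of `a` is determined by its projector `P_x^a`, and the projectors along `a` are
exactly the linear maps that vanish on `a` and induce the identity on `W ⧸ a`. These maps form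
an affine subspace of `Module.End R W`, so `P_x^a − P_y^a + P_z^a` is again the projector onto
a complement of `a`, and every torsor law becomes an identity in the abelian group
`Module.End R W`.
-/

section

open LinearMap

variable {R : Type*} [Ring R] {W : Type*} [AddCommGroup W] [Module R W] {a : Submodule R W}

lemma prj_eq_projection (x : Submodule R W) (h : IsCompl x a) :
    prj x a h = x.projection a h :=
  rfl

def IsProjAlong (a : Submodule R W) (f : W →ₗ[R] W) : Prop :=
  a ≤ ker f ∧ ∀ w, w - f w ∈ a

lemma isProjAlong_projection {x : Submodule R W} (h : IsCompl x a) :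
    IsProjAlong a (x.projection a h) :=
  ⟨(Submodule.ker_projection h).ge, Submodule.sub_projection_mem h⟩

namespace IsProjAlong

variable {f g h : W →ₗ[R] W}

lemma sub_add (hf : IsProjAlong a f) (hg : IsProjAlong a g) (hh : IsProjAlong a h) :
    IsProjAlong a (f - g + h) := by
  refine ⟨fun w hw => ?_, fun w => ?_⟩
  · simp [mem_ker.mp (hf.1 hw), mem_ker.mp (hg.1 hw), mem_ker.mp (hh.1 hw)]
  · have hsplit : w - (f - g + h) w = (w - f w) - (w - g w) + (w - h w) := by
      simp only [LinearMap.add_apply, LinearMap.sub_apply]; abel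
    rw [hsplit]
    exact add_mem (sub_mem (hf.2 w) (hg.2 w)) (hh.2 w)

lemma ker_eq (hf : IsProjAlong a f) : ker f = a :=
  le_antisymm (fun w hw => by simpa [mem_ker.mp hw] using hf.2 w) hf.1

lemma isIdempotentElem (hf : IsProjAlong a f) : IsIdempotentElem f := by
  ext w
  have hfix : f (w - f w) = 0 := hf.1 (hf.2 w)
  rw [map_sub, sub_eq_zero] at hfix
  exact hfix.symm

lemma isCompl_range (hf : IsProjAlong a f) : IsCompl (range f) a :=
  hf.ker_eq ▸ hf.isIdempotentElem.isCompl

lemma projection_range (hf : IsProjAlong a f) :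
    (range f).projection a hf.isCompl_range = f := by
  obtain rfl := hf.ker_eq
  exact hf.isIdempotentElem.eq_projection.symm

end IsProjAlong

namespace Ca

lemma isProjAlong_Q (x y z : Ca W a) : IsProjAlong a (Q x y z) :=
  (isProjAlong_projection x.2).sub_add (isProjAlong_projection y.2) (isProjAlong_projection z.2)

lemma ext_prj {x y : Ca W a} (h : prj x.1 a x.2 = prj y.1 a y.2) : x = y :=
  Subtype.ext <| by simpa [prj_eq_projection] using congrArg range h

noncomputable def ternOp (x y z : Ca W a) : Ca W a :=
  ⟨range (Q x y z), (isProjAlong_Q x y z).isCompl_range⟩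

lemma prj_ternOp (x y z : Ca W a) : prj (ternOp x y z).1 a (ternOp x y z).2 = Q x y z :=
  (isProjAlong_Q x y z).projection_range

end Ca

end

/-- On the set `C_a` of complements of `a`, the operation
`(x,y,z) ↦ (P_x^a − P_y^a + P_z^a)(W)` is well-defined (the operator is idempotent,
has kernel `a`, and its image is a complement of `a`), and it makes `C_a` a commutative
torsor. -/
theorem Ca_abelian_torsor {R : Type*} [Ring R] {W : Type*} [AddCommGroup W] [Module R W]
    (a : Submodule R W) :
    (∀ x y z : Ca W a,
        Q x y z ∘ₗ Q x y z = Q x y z ∧ LinearMap.ker (Q x y z) = a ∧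
        IsCompl (LinearMap.range (Q x y z)) a) ∧
    ∃ T : Ca W a → Ca W a → Ca W a → Ca W a,
      (∀ x y z, (T x y z).1 = LinearMap.range (Q x y z)) ∧
      (∀ x y z u v, T x y (T z u v) = T x (T u z y) v) ∧
      (∀ x y z u v, T x y (T z u v) = T (T x y z) u v) ∧
      (∀ x y, T x x y = y) ∧ (∀ x y, T y x x = y) ∧
      (∀ x y z, T x y z = T z y x) := by
  refine ⟨fun x y z => ?_, Ca.ternOp, fun _ _ _ => rfl, ?_, ?_, ?_, ?_, ?_⟩
  · have hQ := Ca.isProjAlong_Q x y z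
    exact ⟨hQ.isIdempotentElem, hQ.ker_eq, hQ.isCompl_range⟩
  all_goals
    intros
    apply Ca.ext_prj
    simp only [Ca.prj_ternOp, Q]
    abel
end
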